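/- For every n ≥ 3, the cycle graph C_n on n vertices satisfies b(C_n) = ⌈√n⌉. -/

import Mathlib

open SimpleGraph

/-- A burning sequence of length `k` for `G` is a sequence `x₁, …, x_k` of vertices
(indexed by `Fin k`, so `x i` is `x_{i+1}`) such that every vertex lies within graph
distance `k - (i+1)` of some `x_{i+1}`. -/
def IsBurningSequence {V : Type*} (G : SimpleGraph V) {k : ℕ} (x : Fin k → V) : Prop :=
  ∀ v : V, ∃ i : Fin k, G.dist (x i) v ≤ k - 1 - i.val

/-- The burning number of `G`: the minimum length of a burning sequence for `G`. -/
noncomputable def burningNumber {V : Type*} (G : SimpleGraph V) : ℕ :=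
  sInf {k | ∃ x : Fin k → V, IsBurningSequence G x}

private lemma minD {n : ℕ} [NeZero n] (a b : Fin n) (hb : b.val = 1) :
    min ((a+b).val) ((-(a+b)).val) ≤ min a.val ((-a).val) + 1 := by
  have hn : 1 < n := hb ▸ b.isLt
  have h1 : (a+b).val = (a.val + 1) % n := by rw [Fin.val_add, hb]
  have hneg : ∀ c : Fin n, (-c).val = (n - c.val) % n := fun c => rfl
  have ha := a.isLt
  rcases Nat.lt_or_ge (a.val + 1) n with h | h
  · have h1' : (a+b).val = a.val + 1 := by rw [h1, Nat.mod_eq_of_lt h]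
    have h2 : (-(a+b)).val = n - (a.val + 1) := by
      rw [hneg, h1', Nat.mod_eq_of_lt (by omega)]
    rcases Nat.eq_zero_or_pos a.val with h0 | h0
    · have h3 : (-a).val = 0 := by rw [hneg, h0, Nat.sub_zero, Nat.mod_self]
      omega
    · have h3 : (-a).val = n - a.val := by rw [hneg, Nat.mod_eq_of_lt (by omega)]
      omega
  · have h1' : (a+b).val = 0 := by
      have he : a.val + 1 = n := by omega
      rw [h1, he, Nat.mod_self]
    have h2 : (-(a+b)).val = 0 := by rw [hneg, h1', Nat.sub_zero, Nat.mod_self]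
    omega

open Fin.CommRing in
private lemma min_le_walk_length {n : ℕ} [NeZero n] {u v : Fin n}
    (p : (cycleGraph n).Walk u v) :
    min ((v-u).val) ((u-v).val) ≤ p.length := by
  induction p with
  | nil => simp
  | @cons u w v h p ih =>
    rw [Walk.length_cons]
    have hadj := cycleGraph_adj'.mp h
    have key : min ((v-u).val) ((u-v).val) ≤ min ((v-w).val) ((w-v).val) + 1 := by
      rcases hadj with h1 | h1
      · have hm := minD (w-v) (u-w) h1
        have e1 : (w-v) + (u-w) = u - v := by ring
        have e2 : -(u-v) = v - u := by ring
        have e3 : -(w-v) = v - w := by ring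
        rw [e1, e2, e3] at hm
        omega
      · have hm := minD (v-w) (w-u) h1
        have e1 : v-w + (w-u) = v - u := by ring
        have e2 : -(v-w) = w - v := by ring
        have e3 : -(v-u) = u - v := by ring
        rw [e1, e2, e3] at hm
        omega
    omega

private lemma min_le_dist {n : ℕ} [NeZero n] (hc : (cycleGraph n).Connected) (u v : Fin n) :
    min ((v-u).val) ((u-v).val) ≤ (cycleGraph n).dist u v := by
  obtain ⟨p, hp⟩ := hc.exists_walk_length_eq_dist u v
  exact hp ▸ min_le_walk_length p

open Fin.CommRing in
private lemma dist_add_cast {n : ℕ} [NeZero n] (hn : 1 < n) (v : Fin n) (d : ℕ) :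
    (cycleGraph n).dist v (v + (d : Fin n)) ≤ d := by
  induction d with
  | zero => simp
  | succ d ih =>
    have hadj : (cycleGraph n).Adj (v + (d : Fin n)) (v + ((d+1 : ℕ) : Fin n)) := by
      rw [cycleGraph_adj']
      right
      have h2 : (v + ((d+1 : ℕ) : Fin n)) - (v + (d : Fin n)) = 1 := by
        push_cast; ring
      rw [h2, Fin.val_one']
      exact Nat.mod_eq_of_lt hn
    have hc : (cycleGraph n).Connected := by
      obtain ⟨m, rfl⟩ : ∃ m, n = m + 1 := ⟨n - 1, by omega⟩
      exact cycleGraph_connected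
    have h1 : (cycleGraph n).dist (v + (d : Fin n)) (v + ((d+1:ℕ):Fin n)) = 1 :=
      dist_eq_one_iff_adj.mpr hadj
    have := hc.dist_triangle (u := v) (v := v + (d : Fin n)) (w := v + ((d+1:ℕ) : Fin n))
    omega

open Fin.CommRing in
private lemma dist_le_of_mod {n : ℕ} [NeZero n] (hn : 1 < n) (u v : Fin n) (d : ℕ)
    (h : (u.val + d) % n = v.val) : (cycleGraph n).dist u v ≤ d := by
  have he : u + (d : Fin n) = v := by
    apply Fin.ext
    rw [Fin.val_add, Fin.val_natCast, ← h, Nat.add_mod_mod]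
  exact he ▸ dist_add_cast hn u d

open Fin.CommRing in
private lemma ball_card_le {n : ℕ} [NeZero n] (hc : (cycleGraph n).Connected)
    (c : Fin n) (r : ℕ) :
    (Finset.univ.filter (fun v => (cycleGraph n).dist c v ≤ r)).card ≤ 2*r+1 := by
  have hsub : (Finset.univ.filter (fun v => (cycleGraph n).dist c v ≤ r)) ⊆
      Finset.image (fun j : ℕ => c + (j : Fin n) - ((r : ℕ) : Fin n)) (Finset.range (2*r+1)) := by
    intro v hv
    rw [Finset.mem_filter] at hv
    have hd := le_trans (min_le_dist hc c v) hv.2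
    rw [Finset.mem_image]
    rcases le_total ((v - c).val) ((c - v).val) with hmin | hmin
    · have ht : (v - c).val ≤ r := by omega
      refine ⟨(v-c).val + r, Finset.mem_range.mpr (by omega), ?_⟩
      push_cast
      ring
    · have ht : (c - v).val ≤ r := by omega
      refine ⟨r - (c - v).val, Finset.mem_range.mpr (by omega), ?_⟩
      rw [Nat.cast_sub ht, Fin.cast_val_eq_self]
      ring
  calc _ ≤ _ := Finset.card_le_card hsub
    _ ≤ (Finset.range (2*r+1)).card := Finset.card_image_le
    _ = 2*r+1 := Finset.card_range _

private lemma sum_odd (m : ℕ) : ∑ i ∈ Finset.range m, (2*i+1) = m*m := by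
  induction m with
  | zero => simp
  | succ m ih => rw [Finset.sum_range_succ, ih]; ring

private lemma sum_odd' (m : ℕ) : ∑ i ∈ Finset.range m, (2*(m-1-i)+1) = m*m := by
  rw [Finset.sum_range_reflect (fun i => 2*i+1) m, sum_odd]

private lemma ceil_sqrt_le {n m : ℕ} (h : n ≤ m*m) : ⌈Real.sqrt n⌉₊ ≤ m := by
  rw [Nat.ceil_le]
  have h1 : (n:ℝ) ≤ (m:ℝ)*(m:ℝ) := by exact_mod_cast h
  have := Real.sqrt_le_sqrt h1
  rwa [Real.sqrt_mul_self (Nat.cast_nonneg m)] at this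

private lemma le_ceil_sqrt_sq (n : ℕ) : n ≤ ⌈Real.sqrt n⌉₊ * ⌈Real.sqrt n⌉₊ := by
  set k := ⌈Real.sqrt n⌉₊
  have h1 : Real.sqrt n ≤ k := Nat.le_ceil _
  have h2 : (n:ℝ) ≤ (k:ℝ)*(k:ℝ) := by
    nlinarith [Real.sq_sqrt (show (0:ℝ) ≤ n from Nat.cast_nonneg n), Real.sqrt_nonneg (n:ℝ)]
  exact_mod_cast h2

theorem burningNumber_cycleGraph (n : ℕ) (hn : 3 ≤ n) :
    burningNumber (cycleGraph n) = ⌈Real.sqrt (n : ℝ)⌉₊ := by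
  haveI : NeZero n := ⟨by omega⟩
  have hn1 : 1 < n := by omega
  have hc : (cycleGraph n).Connected := by
    obtain ⟨m, rfl⟩ : ∃ m, n = m + 1 := ⟨n - 1, by omega⟩
    exact cycleGraph_connected
  set k := ⌈Real.sqrt (n : ℝ)⌉₊ with hk
  have hkk : n ≤ k * k := le_ceil_sqrt_sq n
  have hk1 : 1 ≤ k := by
    by_contra h
    interval_cases k; omega
  -- Upper bound: construct a burning sequence of length k
  have hmem : k ∈ {m | ∃ x : Fin m → Fin n, IsBurningSequence (cycleGraph n) x} := by
    refine ⟨fun i => ⟨(k*k - (k - i.val)*(k - i.val) + (k - 1 - i.val)) % n,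
      Nat.mod_lt _ (by omega)⟩, ?_⟩
    intro v
    -- choose the right index
    set w := k*k - 1 - v.val with hw
    set q := Nat.sqrt w with hq
    have hv := v.isLt
    have hq1 : q*q ≤ w := by have h := Nat.sqrt_le' w; rwa [pow_two] at h
    have hq2 : w < (q+1)*(q+1) := by
      have h := Nat.lt_succ_sqrt' w; rwa [Nat.succ_eq_add_one, pow_two] at h
    have hqk : q < k := by
      have hwk : w < k*k := by omega
      exact Nat.sqrt_lt'.mpr (by rwa [pow_two])
    refine ⟨⟨k - 1 - q, by omega⟩, ?_⟩
    simp only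
    have hki : k - (k - 1 - q) = q + 1 := by omega
    have hri : k - 1 - (k - 1 - q) = q := by omega
    rw [hki, hri]
    have hqq : (q+1)*(q+1) = q*q + 2*q + 1 := by ring
    set c := k*k - (q+1)*(q+1) + q with hc'
    -- s_i = k*k - (q+1)^2 ≤ v.val  and  v.val ≤ s_i + 2q
    have hs1 : k*k - (q+1)*(q+1) ≤ v.val := by omega
    have hs2 : v.val ≤ k*k - (q+1)*(q+1) + 2*q := by omega
    rcases le_or_gt c v.val with hcase | hcase
    · calc (cycleGraph n).dist ⟨c % n, Nat.mod_lt _ (by omega)⟩ v ≤ v.val - c := by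
            apply dist_le_of_mod hn1 _ _ (v.val - c)
            show (c % n + (v.val - c)) % n = v.val
            rw [Nat.mod_add_mod, Nat.add_sub_cancel' hcase, Nat.mod_eq_of_lt hv]
        _ ≤ q := by omega
    · rw [SimpleGraph.dist_comm]
      have h2 : c - v.val ≤ q := by omega
      calc (cycleGraph n).dist v ⟨c % n, Nat.mod_lt _ (by omega)⟩ ≤ c - v.val := by
            apply dist_le_of_mod hn1 _ _ (c - v.val)
            show (v.val + (c - v.val)) % n = c % n
            rw [Nat.add_sub_cancel' (le_of_lt hcase)]
        _ ≤ q := h2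
  -- Lower bound: any burning sequence has length at least k
  have hlow : ∀ m ∈ {m | ∃ x : Fin m → Fin n, IsBurningSequence (cycleGraph n) x}, k ≤ m := by
    rintro m ⟨x, hx⟩
    apply ceil_sqrt_le
    have hcover : (Finset.univ : Finset (Fin n)) ⊆
        Finset.univ.biUnion (fun i : Fin m =>
          Finset.univ.filter (fun v => (cycleGraph n).dist (x i) v ≤ m - 1 - i.val)) := by
      intro v _
      obtain ⟨i, hi⟩ := hx v
      exact Finset.mem_biUnion.mpr ⟨i, Finset.mem_univ i, Finset.mem_filter.mpr ⟨Finset.mem_univ v, hi⟩⟩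
    calc n = (Finset.univ : Finset (Fin n)).card := by simp
      _ ≤ (Finset.univ.biUnion (fun i : Fin m =>
            Finset.univ.filter (fun v => (cycleGraph n).dist (x i) v ≤ m - 1 - i.val))).card :=
          Finset.card_le_card hcover
      _ ≤ ∑ i : Fin m, (Finset.univ.filter
            (fun v => (cycleGraph n).dist (x i) v ≤ m - 1 - i.val)).card :=
          Finset.card_biUnion_le
      _ ≤ ∑ i : Fin m, (2*(m - 1 - i.val)+1) :=
          Finset.sum_le_sum (fun i _ => ball_card_le hc (x i) (m - 1 - i.val))
      _ = ∑ i ∈ Finset.range m, (2*(m-1-i)+1) := Fin.sum_univ_eq_sum_range (fun i => 2*(m-1-i)+1) m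
      _ = m*m := sum_odd' m
  exact le_antisymm (Nat.sInf_le hmem) (le_csInf ⟨k, hmem⟩ hlow)
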